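/- arXiv:1511.05836 — 4 statements merged into one kernel-verified Lean document; each statement's English description precedes it below -/
import Mathlib

section
/- Let X₀ be a perpetual point of f (F(X₀) = 0, f(X₀) ≠ 0), h(X) = A·X + b with A invertible, and G the acceleration field of g(Y) = A·f(A⁻¹(Y − b)). Then (DG)(h(X₀)) = A·(DF)(X₀)·A⁻¹, so the eigenvalues of the linearization of the acceleration field at the perpetual point are preserved under the affine transformation. -/
/-!
The affine change of variables `y = A x + b` conjugates the acceleration field itself:
`G y = A F(A⁻¹ (y - b))`, because the factor `A⁻¹` produced by the chain rule in `Dg` cancels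
against the factor `A` in `g`. Differentiating once more, `DG(h x) = A · DF(x) · A⁻¹`,
and conjugate matrices have the same characteristic polynomial.
-/

section AccelerationField

variable {𝕜 E : Type*} [NontriviallyNormedField 𝕜] [NormedAddCommGroup E] [NormedSpace 𝕜 E]

variable (𝕜) in
noncomputable def accelerationField (f : E → E) (x : E) : E := fderiv 𝕜 f x (f x)

theorem ContDiff.differentiable_accelerationField {f : E → E} (hf : ContDiff 𝕜 2 f) :
    Differentiable 𝕜 (accelerationField 𝕜 f) := fun x =>
  ((hf.fderiv_right (by norm_num)).differentiable one_ne_zero x).clm_apply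
    (hf.differentiable (by norm_num) x)

variable (e : E ≃L[𝕜] E) (b : E)

theorem HasFDerivAt.affineConj {F : E → E} {L : E →L[𝕜] E} {y : E}
    (hF : HasFDerivAt F L (e.symm (y - b))) :
    HasFDerivAt (fun y => e (F (e.symm (y - b))))
      (e ∘L L ∘L e.symm) y := by
  have hinner : HasFDerivAt (fun y => e.symm (y - b)) (e.symm : E →L[𝕜] E) y := by
    have := e.symm.hasFDerivAt.comp y (hasFDerivAt_sub_const (x := y) b)
    rwa [ContinuousLinearMap.comp_id] at this
  exact e.hasFDerivAt.comp y (hF.comp y hinner)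

theorem accelerationField_affineConj {f : E → E} (hf : Differentiable 𝕜 f) :
    accelerationField 𝕜 (fun y => e (f (e.symm (y - b)))) =
      fun y => e (accelerationField 𝕜 f (e.symm (y - b))) := by
  funext y
  rw [accelerationField, ((hf _).hasFDerivAt.affineConj e b).fderiv]
  simp [accelerationField]

end AccelerationField

theorem LinearMap.toMatrix'_conj_continuousLinearEquiv {𝕜 ι : Type*} [NontriviallyNormedField 𝕜]
    [Fintype ι] [DecidableEq ι] (e : (ι → 𝕜) ≃L[𝕜] (ι → 𝕜)) (L : (ι → 𝕜) →L[𝕜] (ι → 𝕜)) :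
    toMatrix' ((e ∘L L ∘L e.symm : (ι → 𝕜) →L[𝕜] (ι → 𝕜)) : (ι → 𝕜) →ₗ[𝕜] (ι → 𝕜)) =
      toMatrix' (e : (ι → 𝕜) →ₗ[𝕜] (ι → 𝕜)) * toMatrix' (L : (ι → 𝕜) →ₗ[𝕜] (ι → 𝕜)) *
        (toMatrix' (e : (ι → 𝕜) →ₗ[𝕜] (ι → 𝕜)))⁻¹ := by
  have he_symm : toMatrix' (e.symm : (ι → 𝕜) →ₗ[𝕜] (ι → 𝕜)) =
      (toMatrix' (e : (ι → 𝕜) →ₗ[𝕜] (ι → 𝕜)))⁻¹ := by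
    refine (Matrix.inv_eq_right_inv ?_).symm
    rw [← toMatrix'_comp, ← toMatrix'_id]
    congr 1
    ext v : 1
    simp
  rw [← he_symm, ← toMatrix'_comp, ← toMatrix'_comp]
  rfl

theorem stmt_4_general (n : ℕ) (f : (Fin n → ℝ) → (Fin n → ℝ)) (hf : ContDiff ℝ 2 f)
    (A : Matrix (Fin n) (Fin n) ℝ) [Invertible A] (b : Fin n → ℝ)
    (h g F G : (Fin n → ℝ) → (Fin n → ℝ))
    (hh : ∀ X, h X = A.mulVec X + b)
    (hg : ∀ Y, g Y = A.mulVec (f (A⁻¹.mulVec (Y - b))))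
    (hF : ∀ X, F X = fderiv ℝ f X (f X))
    (hG : ∀ Y, G Y = fderiv ℝ g Y (g Y))
    (X₀ : Fin n → ℝ) :
    LinearMap.toMatrix' (fderiv ℝ G (h X₀) : (Fin n → ℝ) →ₗ[ℝ] (Fin n → ℝ))
      = A * LinearMap.toMatrix' (fderiv ℝ F X₀ : (Fin n → ℝ) →ₗ[ℝ] (Fin n → ℝ)) * A⁻¹ ∧
    (LinearMap.toMatrix' (fderiv ℝ G (h X₀) : (Fin n → ℝ) →ₗ[ℝ] (Fin n → ℝ))).charpoly
      = (LinearMap.toMatrix' (fderiv ℝ F X₀ : (Fin n → ℝ) →ₗ[ℝ] (Fin n → ℝ))).charpoly := by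
  set e := (A.toLinearEquiv' ‹_›).toContinuousLinearEquiv
  have he : ∀ v, e v = A.mulVec v := fun _ => rfl
  have he_symm : ∀ v, e.symm v = A⁻¹.mulVec v := fun v => by
    rw [← Matrix.invOf_eq_nonsing_inv]; rfl
  have hF' : F = accelerationField ℝ f := funext hF
  have hg' : g = fun y => e (f (e.symm (y - b))) := funext fun y => by simp [hg, he, he_symm]
  have hG' : G = fun y => e (F (e.symm (y - b))) := by
    rw [funext hG, hF']
    exact hg' ▸ accelerationField_affineConj e b (hf.differentiable (by norm_num))
  have hX₀ : e.symm (h X₀ - b) = X₀ := by simp [hh, he_symm]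
  have hDG : fderiv ℝ G (h X₀) = e ∘L fderiv ℝ F X₀ ∘L e.symm := by
    rw [hG']
    refine (HasFDerivAt.affineConj e b ?_).fderiv
    rw [hX₀, hF']
    exact (hf.differentiable_accelerationField X₀).hasFDerivAt
  have hconj : LinearMap.toMatrix' (fderiv ℝ G (h X₀) : (Fin n → ℝ) →ₗ[ℝ] (Fin n → ℝ))
      = A * LinearMap.toMatrix' (fderiv ℝ F X₀ : (Fin n → ℝ) →ₗ[ℝ] (Fin n → ℝ)) * A⁻¹ := by
    rw [hDG, LinearMap.toMatrix'_conj_continuousLinearEquiv]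
    simp [e]
  exact ⟨hconj, hconj ▸ Matrix.charpoly_units_conj (unitOfInvertible A) _⟩

/-- At a perpetual point X₀ of f, the Jacobian of the transformed
acceleration field G at h(X₀) equals A·(DF)(X₀)·A⁻¹, so the eigenvalues of the
linearization at the perpetual point are preserved (same characteristic polynomial). -/
theorem stmt_4 (n : ℕ) (f : (Fin n → ℝ) → (Fin n → ℝ)) (hf : ContDiff ℝ 2 f)
    (A : Matrix (Fin n) (Fin n) ℝ) [Invertible A] (b : Fin n → ℝ)
    (h g F G : (Fin n → ℝ) → (Fin n → ℝ))
    (hh : ∀ X, h X = A.mulVec X + b)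
    (hg : ∀ Y, g Y = A.mulVec (f (A⁻¹.mulVec (Y - b))))
    (hF : ∀ X, F X = fderiv ℝ f X (f X))
    (hG : ∀ Y, G Y = fderiv ℝ g Y (g Y))
    (X₀ : Fin n → ℝ) (hpp : F X₀ = 0) (hvel : f X₀ ≠ 0) :
    LinearMap.toMatrix' (fderiv ℝ G (h X₀) : (Fin n → ℝ) →ₗ[ℝ] (Fin n → ℝ))
      = A * LinearMap.toMatrix' (fderiv ℝ F X₀ : (Fin n → ℝ) →ₗ[ℝ] (Fin n → ℝ)) * A⁻¹ ∧
    (LinearMap.toMatrix' (fderiv ℝ G (h X₀) : (Fin n → ℝ) →ₗ[ℝ] (Fin n → ℝ))).charpoly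
      = (LinearMap.toMatrix' (fderiv ℝ F X₀ : (Fin n → ℝ) →ₗ[ℝ] (Fin n → ℝ))).charpoly :=
  stmt_4_general n f hf A b h g F G hh hg hF hG X₀
end

section
/- If h: ℝⁿ → ℝⁿ is C² with g ∘ h = Dh · f, and at a point X₀ the second derivative satisfies (D²h)(X₀)[f(X₀), f(X₀)] = 0 and F(X₀) = 0, then G(h(X₀)) = 0; i.e., perpetual points of f at which the quadratic correction term vanishes map to zeros of the transformed acceleration field. -/
/-!
Differentiate the conjugacy relation `g (h x) = Dh(x) (f x)` at `X₀` in the direction `f X₀`.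
By the chain rule the left side gives `Dg(h X₀) (Dh(X₀) (f X₀)) = Dg(h X₀) (g (h X₀)) = G (h X₀)`;
by the product rule the right side gives `Dh(X₀) (F X₀) + D²h(X₀)[f X₀, f X₀]`, and both terms vanish.
-/

open Filter Topology

section Semiconj

variable {𝕜 : Type*} [NontriviallyNormedField 𝕜]
  {E : Type*} [NormedAddCommGroup E] [NormedSpace 𝕜 E]
  {F : Type*} [NormedAddCommGroup F] [NormedSpace 𝕜 F]
  {f : E → E} {g : F → F} {h : E → F} {x : E}

theorem fderiv_apply_fderiv_eq_of_semiconj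
    (hconj : (fun y => g (h y)) =ᶠ[𝓝 x] fun y => fderiv 𝕜 h y (f y))
    (hf : DifferentiableAt 𝕜 f x) (hg : DifferentiableAt 𝕜 g (h x))
    (hh : DifferentiableAt 𝕜 h x) (hDh : DifferentiableAt 𝕜 (fderiv 𝕜 h) x) (v : E) :
    fderiv 𝕜 g (h x) (fderiv 𝕜 h x v) =
      fderiv 𝕜 h x (fderiv 𝕜 f x v) + fderiv 𝕜 (fderiv 𝕜 h) x v (f x) := by
  have hcomp : HasFDerivAt (fun y => g (h y)) ((fderiv 𝕜 g (h x)).comp (fderiv 𝕜 h x)) x :=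
    hg.hasFDerivAt.comp x hh.hasFDerivAt
  have hprod := (hDh.hasFDerivAt.clm_apply hf.hasFDerivAt).congr_of_eventuallyEq hconj
  simpa using congrArg (fun L : E →L[𝕜] F => L v) (hcomp.unique hprod)

theorem fderiv_apply_self_eq_of_semiconj
    (hconj : (fun y => g (h y)) =ᶠ[𝓝 x] fun y => fderiv 𝕜 h y (f y))
    (hf : DifferentiableAt 𝕜 f x) (hg : DifferentiableAt 𝕜 g (h x))
    (hh : DifferentiableAt 𝕜 h x) (hDh : DifferentiableAt 𝕜 (fderiv 𝕜 h) x) :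
    fderiv 𝕜 g (h x) (g (h x)) =
      fderiv 𝕜 h x (fderiv 𝕜 f x (f x)) + fderiv 𝕜 (fderiv 𝕜 h) x (f x) (f x) := by
  rw [show g (h x) = _ from hconj.self_of_nhds]
  exact fderiv_apply_fderiv_eq_of_semiconj hconj hf hg hh hDh (f x)

end Semiconj

/-- If h is C² with g∘h = Dh·f, and at X₀ the quadratic correction
(D²h)(X₀)[f X₀, f X₀] vanishes and F(X₀) = 0, then G(h X₀) = 0. -/
theorem stmt_6 (n : ℕ) (f g h F G : (Fin n → ℝ) → (Fin n → ℝ))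
    (hf : ContDiff ℝ 1 f) (hgc : ContDiff ℝ 1 g) (hh : ContDiff ℝ 2 h)
    (hconj : ∀ X, g (h X) = fderiv ℝ h X (f X))
    (hF : ∀ X, F X = fderiv ℝ f X (f X))
    (hG : ∀ Y, G Y = fderiv ℝ g Y (g Y))
    (X₀ : Fin n → ℝ)
    (hsec : fderiv ℝ (fun x => fderiv ℝ h x) X₀ (f X₀) (f X₀) = 0)
    (hpp : F X₀ = 0) :
    G (h X₀) = 0 := by
  have hDh : DifferentiableAt ℝ (fderiv ℝ h) X₀ :=
    (hh.fderiv_right (by norm_num)).differentiable one_ne_zero X₀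
  rw [hG, fderiv_apply_self_eq_of_semiconj (Eventually.of_forall hconj)
    (hf.differentiable one_ne_zero X₀) (hgc.differentiable one_ne_zero _)
    (hh.differentiable two_ne_zero X₀) hDh, ← hF, hpp, hsec, map_zero, add_zero]
end

section
/- Let g(y) = ((y−β)² − α²A²)/α with α ≠ 0, and G(y) = g'(y)·g(y) = (2/α²)(y−β)((y−β)² − α²A²) its acceleration field. Then y = β is the unique perpetual point of g (G(β) = 0, g(β) = −αA² ≠ 0 when A ≠ 0), and G'(β) = −2A², equal to the eigenvalue of the original system at its perpetual point x = 0. -/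
/-! Since `G = g' * g`, a zero of `G` at which `g` does not vanish is a zero of
`g' y = 2 (y - β) / α`, so it can only be the vertex `β`. There `g' β = 0`, hence the product
rule gives `G'(β) = g'' · g(β) = (2 / α) · (-α A²) = -2 A²`. -/

section ShiftedQuadratic

variable (α β c : ℝ)

theorem hasDerivAt_sub_sq_sub_div (y : ℝ) :
    HasDerivAt (fun y => ((y - β) ^ 2 - c) / α) (2 * (y - β) / α) y := by
  simpa using ((((hasDerivAt_id y).sub_const β).pow 2).sub_const c).div_const α

theorem deriv_sub_sq_sub_div :
    deriv (fun y => ((y - β) ^ 2 - c) / α) = fun y => 2 * (y - β) / α :=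
  funext fun y => (hasDerivAt_sub_sq_sub_div α β c y).deriv

theorem hasDerivAt_deriv_mul_sub_sq_sub_div_at_vertex :
    HasDerivAt (fun y => 2 * (y - β) / α * (((y - β) ^ 2 - c) / α)) (-2 * c / α ^ 2) β := by
  have hlin : HasDerivAt (fun y => 2 * (y - β) / α) (2 / α) β := by
    simpa using (((hasDerivAt_id β).sub_const β).const_mul 2).div_const α
  exact (hlin.mul (hasDerivAt_sub_sq_sub_div α β c β)).congr_deriv (by ring)

end ShiftedQuadratic

/-- For g(y) = ((y−β)² − α²A²)/α (α ≠ 0, A ≠ 0) with acceleration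
G(y) = g'(y)·g(y), y = β is the unique perpetual point of g (G(β) = 0 and
g(β) = −αA² ≠ 0) and G'(β) = −2A², matching the original eigenvalue at x = 0. -/
theorem stmt_12 (A α β : ℝ) (hA : A ≠ 0) (hα : α ≠ 0) (g G : ℝ → ℝ)
    (hg : ∀ y, g y = ((y - β) ^ 2 - α ^ 2 * A ^ 2) / α)
    (hG : ∀ y, G y = deriv g y * g y) :
    (∀ y, G y = (2 / α ^ 2) * (y - β) * ((y - β) ^ 2 - α ^ 2 * A ^ 2)) ∧
    G β = 0 ∧ g β = -α * A ^ 2 ∧ g β ≠ 0 ∧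
    (∀ y, G y = 0 → g y ≠ 0 → y = β) ∧
    deriv G β = -2 * A ^ 2 := by
  obtain rfl : g = fun y => ((y - β) ^ 2 - α ^ 2 * A ^ 2) / α := funext hg
  obtain rfl : G = fun y => 2 * (y - β) / α * (((y - β) ^ 2 - α ^ 2 * A ^ 2) / α) := by
    funext y
    rw [hG, deriv_sub_sq_sub_div]
  have hgβ : ((β - β) ^ 2 - α ^ 2 * A ^ 2) / α = -α * A ^ 2 := by
    field_simp
    ring
  refine ⟨fun y => by field_simp, by simp, hgβ, ?_, ?_, ?_⟩
  · dsimp only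
    rw [hgβ]
    exact mul_ne_zero (neg_ne_zero.mpr hα) (pow_ne_zero 2 hA)
  · intro y hGy hgy
    have hvertex : 2 * (y - β) / α = 0 := (mul_eq_zero.mp hGy).resolve_right hgy
    simpa [hα, sub_eq_zero] using hvertex
  · rw [(hasDerivAt_deriv_mul_sub_sq_sub_div_at_vertex α β _).deriv]
    field_simp
end

section
/- For g(y) = 2√y(y − A²) on y > 0 with A > 0, the acceleration field G(y) = g'(y)·g(y) = 2(3y − A²)(y − A²) has a perpetual point at y = A²/3 with G'(A²/3) = −4A² and g(A²/3) ≠ 0; note A²/3 is not the image under h(x) = x² of the perpetual point x = 0 of the original system f(x) = x² − A². -/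
open Real Filter Topology

section SqrtCubic

variable (c : ℝ)

theorem hasDerivAt_two_mul_sqrt_mul_sub {y : ℝ} (hy : 0 < y) :
    HasDerivAt (fun y => 2 * √y * (y - c)) ((3 * y - c) / √y) y := by
  have hsqrt : √y ≠ 0 := (sqrt_pos.mpr hy).ne'
  refine ((hasDerivAt_sqrt hy.ne').const_mul 2).mul ((hasDerivAt_id' y).sub_const c)
    |>.congr_deriv ?_
  field_simp
  rw [sq_sqrt hy.le]
  ring

theorem deriv_mul_self_two_mul_sqrt_mul_sub {y : ℝ} (hy : 0 < y) :
    deriv (fun y => 2 * √y * (y - c)) y * (2 * √y * (y - c)) =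
      2 * (3 * y - c) * (y - c) := by
  have hsqrt : √y ≠ 0 := (sqrt_pos.mpr hy).ne'
  rw [(hasDerivAt_two_mul_sqrt_mul_sub c hy).deriv]
  field_simp

theorem hasDerivAt_two_mul_three_mul_sub_mul_sub (y : ℝ) :
    HasDerivAt (fun y => 2 * (3 * y - c) * (y - c)) (12 * y - 8 * c) y := by
  refine ((((hasDerivAt_id' y).const_mul 3).sub_const c).const_mul 2).mul
    ((hasDerivAt_id' y).sub_const c) |>.congr_deriv ?_
  ring

end SqrtCubic

/-- For g(y) = 2√y(y − A²) on y > 0 (A > 0), the acceleration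
field G(y) = g'(y)·g(y) equals 2(3y − A²)(y − A²) on y > 0, has a perpetual
point at y = A²/3 with G'(A²/3) = −4A² and g(A²/3) ≠ 0; and A²/3 is not the
image under h(x) = x² of the original perpetual point x = 0. -/
theorem stmt_14 (A : ℝ) (hA : 0 < A) (g G : ℝ → ℝ)
    (hg : ∀ y, g y = 2 * Real.sqrt y * (y - A ^ 2))
    (hG : ∀ y, G y = deriv g y * g y) :
    (∀ y, 0 < y → G y = 2 * (3 * y - A ^ 2) * (y - A ^ 2)) ∧
    G (A ^ 2 / 3) = 0 ∧ g (A ^ 2 / 3) ≠ 0 ∧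
    deriv G (A ^ 2 / 3) = -4 * A ^ 2 ∧
    A ^ 2 / 3 ≠ (0 : ℝ) ^ 2 := by
  obtain rfl : g = fun y => 2 * √y * (y - A ^ 2) := funext hg
  have hG_eq : ∀ y, 0 < y → G y = 2 * (3 * y - A ^ 2) * (y - A ^ 2) := fun y hy => by
    rw [hG]
    exact deriv_mul_self_two_mul_sqrt_mul_sub _ hy
  have hy₀ : 0 < A ^ 2 / 3 := by positivity
  have hG_near : G =ᶠ[𝓝 (A ^ 2 / 3)] fun y => 2 * (3 * y - A ^ 2) * (y - A ^ 2) :=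
    eventually_of_mem (Ioi_mem_nhds hy₀) hG_eq
  refine ⟨hG_eq, ?_, ?_, ?_, ?_⟩
  · rw [hG_eq _ hy₀]
    ring
  · have : A ^ 2 / 3 - A ^ 2 ≠ 0 := by nlinarith
    exact mul_ne_zero (mul_ne_zero two_ne_zero (sqrt_pos.mpr hy₀).ne') this
  · rw [hG_near.deriv_eq, (hasDerivAt_two_mul_three_mul_sub_mul_sub _ _).deriv]
    ring
  · rw [zero_pow two_ne_zero]
    exact hy₀.ne'
end
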